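/- arXiv:2402.15104 — 3 statements merged into one kernel-verified Lean document; each statement's English description precedes it below -/
import Mathlib

section
/- Let (γ,ν) : I → ℝ² × S¹ be a Legendre curve with curvature (ℓ,β) such that β = αℓ for a smooth function α, write ν = (a,b), and let Φ(x,y) = (a₁₁x + a₁₂y, a₂₁x + a₂₂y) be a linear map with D := a₁₁a₂₂ − a₁₂a₂₁ ≠ 0. Set ν̄ = (a₂₂a − a₂₁b, −a₁₂a + a₁₁b), so that (Φ∘γ, ν̄/|ν̄|) is a Legendre curve with curvature (ℓ̃,β̃) = (Dℓ/|ν̄|², |ν̄|β). Then β̃ = α̃ℓ̃ with α̃ = |ν̄|³α/D, and a point t₀ ∈ I is a singular point and a vertex of γ (i.e. β(t₀) = 0 and α'(t₀) = 0) if and only if t₀ is a singular point and a vertex of Φ∘γ (i.e. β̃(t₀) = 0 and α̃'(t₀) = 0). -/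
open Real Set

noncomputable section

/-- The Euclidean inner product on the plane `ℝ²`. -/
def dot (p q : ℝ × ℝ) : ℝ := p.1 * q.1 + p.2 * q.2

/-- The Euclidean norm on the plane `ℝ²`. -/
def nrm (p : ℝ × ℝ) : ℝ := Real.sqrt (p.1 ^ 2 + p.2 ^ 2)

/-- Counterclockwise rotation `J` by `π/2` on `ℝ²`. -/
def Jrot (p : ℝ × ℝ) : ℝ × ℝ := (-p.2, p.1)

/-- `(γ, ν)` is a Legendre curve on `I` : both maps are smooth, `ν` is `S¹`-valued,
and `γ'(t) · ν(t) = 0` for all `t ∈ I`. -/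
structure IsLegendreCurve (γ ν : ℝ → ℝ × ℝ) (I : Set ℝ) : Prop where
  smooth_base : ContDiff ℝ (⊤ : ℕ∞) γ
  smooth_normal : ContDiff ℝ (⊤ : ℕ∞) ν
  unit_normal : ∀ t, nrm (ν t) = 1
  tangent : ∀ t ∈ I, dot (deriv γ t) (ν t) = 0

/-- The first curvature function `ℓ = ν' · μ` of a Legendre curve, where `μ = J(ν)`. -/
def ellOf (ν : ℝ → ℝ × ℝ) (t : ℝ) : ℝ := dot (deriv ν t) (Jrot (ν t))

/-- The second curvature function `β = γ' · μ` of a Legendre curve, where `μ = J(ν)`. -/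
def betOf (γ ν : ℝ → ℝ × ℝ) (t : ℝ) : ℝ := dot (deriv γ t) (Jrot (ν t))

/-- `(ℓ, β)` is the curvature of the Legendre curve `(γ, ν)` on `I`. -/
def IsCurvature (γ ν : ℝ → ℝ × ℝ) (ℓ β : ℝ → ℝ) (I : Set ℝ) : Prop :=
  ContDiff ℝ (⊤ : ℕ∞) ℓ ∧ ContDiff ℝ (⊤ : ℕ∞) β ∧ ∀ t ∈ I, ℓ t = ellOf ν t ∧ β t = betOf γ ν t

/-- A Legendre curve on `[a,b]` is closed: `γ, ν, γ', ν'` take the same values at `a` and `b`. -/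
def IsClosedLegendreCurve (γ ν : ℝ → ℝ × ℝ) (a b : ℝ) : Prop :=
  γ a = γ b ∧ ν a = ν b ∧ deriv γ a = deriv γ b ∧ deriv ν a = deriv ν b

/-- `γ` is simple closed on `[a,b]`. -/
def IsSimpleClosed (γ : ℝ → ℝ × ℝ) (a b : ℝ) : Prop :=
  ∀ t₁ t₂, a ≤ t₁ → t₁ < t₂ → t₂ ≤ b → γ t₁ = γ t₂ → t₁ = a ∧ t₂ = b

/-- `γ` is a convex frontal on `I` : its image lies on one side of every tangent line. -/
def IsConvexFrontal (γ ν : ℝ → ℝ × ℝ) (I : Set ℝ) : Prop :=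
  (∀ s ∈ I, ∀ t ∈ I, 0 ≤ dot (γ s - γ t) (ν t)) ∨
  (∀ s ∈ I, ∀ t ∈ I, dot (γ s - γ t) (ν t) ≤ 0)

/-- The zeros of `f` in `I` are isolated points. -/
def HasIsolatedZerosOn (f : ℝ → ℝ) (I : Set ℝ) : Prop :=
  ∀ t ∈ I, f t = 0 → ∃ ε > 0, ∀ s ∈ I, s ≠ t → |s - t| < ε → f s ≠ 0

/-- There are at least four distinct points of `s` satisfying `P`. -/
def FourPoints (P : ℝ → Prop) (s : Set ℝ) : Prop :=
  ∃ t₁ t₂ t₃ t₄, t₁ ∈ s ∧ t₂ ∈ s ∧ t₃ ∈ s ∧ t₄ ∈ s ∧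
    t₁ ≠ t₂ ∧ t₁ ≠ t₃ ∧ t₁ ≠ t₄ ∧ t₂ ≠ t₃ ∧ t₂ ≠ t₄ ∧ t₃ ≠ t₄ ∧
    P t₁ ∧ P t₂ ∧ P t₃ ∧ P t₄

/-- `(γ, ν)` has a point of type `(n, m)` (with `m = n + k`) at `t₀`, with defining function
`f` : after a smooth parameter change sending `t₀` to `0`, the germ of `(γ, ν)` at `t₀` equals
the germ at `0` of the normal form of type `(n, n + k)`. -/
def PointOfType (γ ν : ℝ → ℝ × ℝ) (t₀ : ℝ) (n k : ℕ) (f : ℝ → ℝ) : Prop :=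
  1 ≤ n ∧ 1 ≤ k ∧ ContDiff ℝ (⊤ : ℕ∞) f ∧ f 0 ≠ 0 ∧
  ∃ s : ℝ, (s = 1 ∨ s = -1) ∧
  ∃ φ : ℝ → ℝ, ContDiff ℝ (⊤ : ℕ∞) φ ∧ φ t₀ = 0 ∧ deriv φ t₀ ≠ 0 ∧
  ∃ ε : ℝ, 0 < ε ∧ ∀ u : ℝ, |u - t₀| < ε →
    γ u = (s * φ u ^ n, φ u ^ (n + k) * f (φ u)) ∧
    ν u = ((-((n + k : ℕ) : ℝ) * φ u ^ k * f (φ u) - φ u ^ (k + 1) * deriv f (φ u)) /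
        Real.sqrt ((((n + k : ℕ) : ℝ) * φ u ^ k * f (φ u) + φ u ^ (k + 1) * deriv f (φ u)) ^ 2
          + (n : ℝ) ^ 2),
      s * (n : ℝ) /
        Real.sqrt ((((n + k : ℕ) : ℝ) * φ u ^ k * f (φ u) + φ u ^ (k + 1) * deriv f (φ u)) ^ 2
          + (n : ℝ) ^ 2))

/-- Partial derivative in the first variable. -/
def pdx (f : ℝ × ℝ → ℝ) (p : ℝ × ℝ) : ℝ := deriv (fun x => f (x, p.2)) p.1

/-- Partial derivative in the second variable. -/
def pdy (f : ℝ × ℝ → ℝ) (p : ℝ × ℝ) : ℝ := deriv (fun y => f (p.1, y)) p.2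

/-- Proposition 3.5 (1): under an invertible linear map of the plane,
with `(ℓ̃, β̃) = (D ℓ / |ν̄|², |ν̄| β)`, one has `β̃ = α̃ ℓ̃` with `α̃ = |ν̄|³ α / D`, and
`t₀` is a singular point and a vertex of `γ` iff it is a singular point and a vertex of
`Φ ∘ γ`. -/
theorem singular_vertex_linear_invariance (I : Set ℝ) (hI : I.OrdConnected)
    (γ ν : ℝ → ℝ × ℝ) (ℓ β α : ℝ → ℝ)
    (hLeg : IsLegendreCurve γ ν I)
    (hcurv : IsCurvature γ ν ℓ β I)
    (hα : ContDiff ℝ (⊤ : ℕ∞) α)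
    (hβα : ∀ t ∈ I, β t = α t * ℓ t)
    (a₁₁ a₁₂ a₂₁ a₂₂ : ℝ) (hdet : a₁₁ * a₂₂ - a₁₂ * a₂₁ ≠ 0)
    (νbar : ℝ → ℝ × ℝ)
    (hνbar : ∀ t, νbar t =
      (a₂₂ * (ν t).1 - a₂₁ * (ν t).2, -(a₁₂ * (ν t).1) + a₁₁ * (ν t).2))
    (ℓ' β' α' : ℝ → ℝ)
    (hℓ' : ∀ t, ℓ' t = (a₁₁ * a₂₂ - a₁₂ * a₂₁) * ℓ t / nrm (νbar t) ^ 2)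
    (hβ' : ∀ t, β' t = nrm (νbar t) * β t)
    (hα' : ∀ t, α' t = nrm (νbar t) ^ 3 * α t / (a₁₁ * a₂₂ - a₁₂ * a₂₁)) :
    (∀ t ∈ I, β' t = α' t * ℓ' t) ∧
    ∀ t₀ ∈ I, ((β t₀ = 0 ∧ deriv α t₀ = 0) ↔ (β' t₀ = 0 ∧ deriv α' t₀ = 0)) := by
  classical
  -- basic differentiability
  have hνd : Differentiable ℝ ν := hLeg.smooth_normal.differentiable (by simp)
  have hαd : Differentiable ℝ α := hα.differentiable (by simp)
  set A : ℝ → ℝ := fun t => (ν t).1 with hAdef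
  set B : ℝ → ℝ := fun t => (ν t).2 with hBdef
  have h1 : ∀ t, A t ^ 2 + B t ^ 2 = 1 := by
    intro t
    have h := hLeg.unit_normal t
    unfold nrm at h
    exact Real.sqrt_eq_one.mp h
  set Q : ℝ → ℝ := fun t =>
    (a₂₂ * A t - a₂₁ * B t) ^ 2 + (-(a₁₂ * A t) + a₁₁ * B t) ^ 2 with hQdef
  have hnrmQ : ∀ t, nrm (νbar t) = Real.sqrt (Q t) := by
    intro t; rw [hνbar t]; rfl
  have hQpos : ∀ t, 0 < Q t := by
    intro t
    rcases lt_or_eq_of_le (add_nonneg (sq_nonneg (a₂₂ * A t - a₂₁ * B t))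
      (sq_nonneg (-(a₁₂ * A t) + a₁₁ * B t))) with h | h
    · exact h
    · exfalso
      have hq1 : a₂₂ * A t - a₂₁ * B t = 0 := by nlinarith [sq_nonneg (a₂₂ * A t - a₂₁ * B t), sq_nonneg (-(a₁₂ * A t) + a₁₁ * B t)]
      have hq2 : -(a₁₂ * A t) + a₁₁ * B t = 0 := by nlinarith [sq_nonneg (a₂₂ * A t - a₂₁ * B t), sq_nonneg (-(a₁₂ * A t) + a₁₁ * B t)]
      have hA0 : (a₁₁ * a₂₂ - a₁₂ * a₂₁) * A t = 0 := by linear_combination a₁₁ * hq1 + a₂₁ * hq2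
      have hB0 : (a₁₁ * a₂₂ - a₁₂ * a₂₁) * B t = 0 := by linear_combination a₁₂ * hq1 + a₂₂ * hq2
      have hA0' : A t = 0 := (mul_eq_zero.mp hA0).resolve_left hdet
      have hB0' : B t = 0 := (mul_eq_zero.mp hB0).resolve_left hdet
      have := h1 t
      rw [hA0', hB0'] at this; norm_num at this
  have hn : ∀ t, 0 < nrm (νbar t) := by
    intro t; rw [hnrmQ t]; exact Real.sqrt_pos.mpr (hQpos t)
  constructor
  · intro t ht
    have hb := hβα t ht
    rw [hβ' t, hα' t, hℓ' t, hb]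
    have h2 := (hn t).ne'
    field_simp
  · intro t₀ ht₀
    have hE : ℓ t₀ = ellOf ν t₀ := (hcurv.2.2 t₀ ht₀).1
    have hb : β t₀ = α t₀ * ℓ t₀ := hβα t₀ ht₀
    have hββ' : β' t₀ = 0 ↔ β t₀ = 0 := by
      rw [hβ' t₀]
      constructor
      · intro h
        rcases mul_eq_zero.mp h with h' | h'
        · exact absurd h' (hn t₀).ne'
        · exact h'
      · intro h; rw [h, mul_zero]
    -- derivatives of A, B at t₀
    have hνt : HasDerivAt ν (deriv ν t₀) t₀ := (hνd t₀).hasDerivAt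
    have hAt : HasDerivAt A (deriv ν t₀).1 t₀ := hνt.fst
    have hBt : HasDerivAt B (deriv ν t₀).2 t₀ := hνt.snd
    set E : ℝ := ellOf ν t₀ with hEdef
    have hEeq : E = (deriv ν t₀).1 * (-(B t₀)) + (deriv ν t₀).2 * A t₀ := by
      simp [hEdef, ellOf, dot, Jrot, hAdef, hBdef]
    -- A A' + B B' = 0
    have hsum : HasDerivAt (fun t => A t ^ 2 + B t ^ 2)
        ((2 : ℕ) * A t₀ ^ 1 * (deriv ν t₀).1 + (2 : ℕ) * B t₀ ^ 1 * (deriv ν t₀).2) t₀ :=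
      (hAt.pow 2).add (hBt.pow 2)
    have hconst : HasDerivAt (fun t => A t ^ 2 + B t ^ 2) 0 t₀ := by
      have : (fun t => A t ^ 2 + B t ^ 2) = fun _ => (1 : ℝ) := funext h1
      rw [this]; exact hasDerivAt_const _ _
    have heq1 : A t₀ * (deriv ν t₀).1 + B t₀ * (deriv ν t₀).2 = 0 := by
      have := hsum.unique hconst
      push_cast at this
      linarith
    have hA'val : (deriv ν t₀).1 = -(B t₀) * E := by
      have h1' := h1 t₀
      rw [hEeq]
      linear_combination (-(deriv ν t₀).1) * h1' + A t₀ * heq1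
    have hB'val : (deriv ν t₀).2 = A t₀ * E := by
      have h1' := h1 t₀
      rw [hEeq]
      linear_combination (-(deriv ν t₀).2) * h1' + B t₀ * heq1
    have hAt' : HasDerivAt A (-(B t₀) * E) t₀ := hA'val ▸ hAt
    have hBt' : HasDerivAt B (A t₀ * E) t₀ := hB'val ▸ hBt
    -- derivative of Q at t₀
    set C : ℝ := 2 * (a₂₂ * A t₀ - a₂₁ * B t₀) * (a₂₂ * (-(B t₀)) - a₂₁ * A t₀) +
        2 * (-(a₁₂ * A t₀) + a₁₁ * B t₀) * (-(a₁₂ * (-(B t₀))) + a₁₁ * A t₀) with hCdef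
    have hQt : HasDerivAt Q (E * C) t₀ := by
      have h1' : HasDerivAt (fun t => a₂₂ * A t - a₂₁ * B t)
          (a₂₂ * (-(B t₀) * E) - a₂₁ * (A t₀ * E)) t₀ :=
        (hAt'.const_mul a₂₂).sub (hBt'.const_mul a₂₁)
      have h2' : HasDerivAt (fun t => -(a₁₂ * A t) + a₁₁ * B t)
          (-(a₁₂ * (-(B t₀) * E)) + a₁₁ * (A t₀ * E)) t₀ :=
        ((hAt'.const_mul a₁₂).neg).add (hBt'.const_mul a₁₁)
      have := (h1'.fun_pow 2).fun_add (h2'.fun_pow 2)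
      refine this.congr_deriv ?_
      rw [hCdef]; push_cast; ring
    -- derivative of sqrt ∘ Q
    have hst : HasDerivAt (fun t => Real.sqrt (Q t))
        (E * C / (2 * Real.sqrt (Q t₀))) t₀ := by
      have := (Real.hasDerivAt_sqrt (hQpos t₀).ne').comp t₀ hQt
      refine this.congr_deriv ?_
      ring
    -- derivative of α'
    set s : ℝ := Real.sqrt (Q t₀) with hsdef
    have hspos : 0 < s := Real.sqrt_pos.mpr (hQpos t₀)
    have hg : HasDerivAt (fun t => Real.sqrt (Q t) ^ 3 * α t / (a₁₁ * a₂₂ - a₁₂ * a₂₁))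
        (((3 : ℕ) * s ^ 2 * (E * C / (2 * s)) * α t₀ + s ^ 3 * deriv α t₀) /
          (a₁₁ * a₂₂ - a₁₂ * a₂₁)) t₀ :=
      (((hst.pow 3).mul (hαd t₀).hasDerivAt)).div_const _
    have hα'fun : α' = fun t => Real.sqrt (Q t) ^ 3 * α t / (a₁₁ * a₂₂ - a₁₂ * a₂₁) := by
      funext t; rw [hα' t, hnrmQ t]
    have hkey : deriv α' t₀ =
        (3 * s * (β t₀ * C) / 2 + Q t₀ * s * deriv α t₀) / (a₁₁ * a₂₂ - a₁₂ * a₂₁) := by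
      rw [hα'fun, hg.deriv]
      have hs2 : s ^ 2 = Q t₀ := Real.sq_sqrt (hQpos t₀).le
      have hβE : β t₀ = α t₀ * E := by rw [hb, hE]
      rw [hβE]
      push_cast
      have hnum : (3 : ℝ) * s ^ 2 * (E * C / (2 * s)) * α t₀ + s ^ 3 * deriv α t₀ =
          3 * s * (α t₀ * E * C) / 2 + Q t₀ * s * deriv α t₀ := by
        rw [← hs2]
        field_simp
      rw [hnum]
    constructor
    · rintro ⟨hb0, hda0⟩
      refine ⟨hββ'.mpr hb0, ?_⟩
      rw [hkey, hb0, hda0]; ring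
    · rintro ⟨hb0', hda0'⟩
      have hb0 : β t₀ = 0 := hββ'.mp hb0'
      refine ⟨hb0, ?_⟩
      rw [hkey, hb0] at hda0'
      have hnum := (div_eq_zero_iff.mp hda0').resolve_right hdet
      simp only [zero_mul, mul_zero, zero_div, zero_add] at hnum
      have hQs : Q t₀ * s ≠ 0 := (mul_pos (hQpos t₀) hspos).ne'
      exact (mul_eq_zero.mp hnum).resolve_left hQs
end
end

section
/- Let (γ,ν) : I → ℝ² × S¹ be a Legendre curve with curvature (ℓ,β) and let (k₁,k₂) : I → ℝ² ∖ {0} be smooth with k₁ℓ + k₂β = 0 on I. For λ ∈ ℝ, let (γ̃^λ,ν̃^λ) : I → ℝ² × S¹ be any Legendre curve with curvature (ℓ̃^λ,β̃^λ) = (ℓ + λβ, β). Then the pair (k̃₁^λ,k̃₂^λ) := (k₁, k₂ − λk₁) is nowhere zero, satisfies k̃₁^λℓ̃^λ + k̃₂^λβ̃^λ = 0 on I, and (k̃₁^λ)'k̃₂^λ − k̃₁^λ(k̃₂^λ)' = k₁'k₂ − k₁k₂'. In particular, if t₀ ∈ I is a vertex of γ, then t₀ is a vertex of γ̃^λ.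 -/
open Real Set

noncomputable section

/-- Proposition 4.5: for any Legendre curve `(γ̃^λ, ν̃^λ)` with curvature
`(ℓ + λβ, β)`, the pair `(k₁, k₂ - λk₁)` is nowhere zero, annihilates the new curvature,
and has the same vertex determinant, so a vertex of `γ` is a vertex of `γ̃^λ`. -/
theorem vertex_curvature_shear (I : Set ℝ) (hI : I.OrdConnected)
    (γ ν : ℝ → ℝ × ℝ) (ℓ β k₁ k₂ : ℝ → ℝ)
    (hLeg : IsLegendreCurve γ ν I)
    (hcurv : IsCurvature γ ν ℓ β I)
    (hk₁ : ContDiff ℝ (⊤ : ℕ∞) k₁) (hk₂ : ContDiff ℝ (⊤ : ℕ∞) k₂)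
    (hknz : ∀ t, (k₁ t, k₂ t) ≠ (0, 0))
    (hdep : ∀ t ∈ I, k₁ t * ℓ t + k₂ t * β t = 0)
    (lam : ℝ) (γt νt : ℝ → ℝ × ℝ)
    (hLeg' : IsLegendreCurve γt νt I)
    (hcurv' : ∀ t ∈ I, ellOf νt t = ℓ t + lam * β t ∧ betOf γt νt t = β t) :
    (∀ t, (k₁ t, k₂ t - lam * k₁ t) ≠ (0, 0)) ∧
    (∀ t ∈ I, k₁ t * (ℓ t + lam * β t) + (k₂ t - lam * k₁ t) * β t = 0) ∧
    (∀ t, deriv k₁ t * (k₂ t - lam * k₁ t)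
        - k₁ t * deriv (fun u => k₂ u - lam * k₁ u) t
      = deriv k₁ t * k₂ t - k₁ t * deriv k₂ t) ∧
    ∀ t₀ ∈ I, deriv k₁ t₀ * k₂ t₀ - k₁ t₀ * deriv k₂ t₀ = 0 →
      deriv k₁ t₀ * (k₂ t₀ - lam * k₁ t₀)
        - k₁ t₀ * deriv (fun u => k₂ u - lam * k₁ u) t₀ = 0 := by
  have hd : ∀ t, deriv (fun u => k₂ u - lam * k₁ u) t = deriv k₂ t - lam * deriv k₁ t := by
    intro t
    rw [deriv_fun_sub (hk₂.differentiable (by simp) t)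
      ((hk₁.differentiable (by simp)).const_mul lam t), deriv_const_mul lam (hk₁.differentiable (by simp) t)]
  refine ⟨?_, ?_, ?_, ?_⟩
  · intro t h
    have h1 : k₁ t = 0 := congrArg Prod.fst h
    have h2 : k₂ t - lam * k₁ t = 0 := congrArg Prod.snd h
    rw [h1, mul_zero, sub_zero] at h2
    exact hknz t (Prod.ext h1 h2)
  · intro t ht
    have := hdep t ht
    ring_nf
    ring_nf at this
    linarith
  · intro t; rw [hd]; ring
  · intro t₀ ht₀ h; rw [hd]; linarith [hd t₀]
end
end

section
/- Let (γ,ν) : I → ℝ² × S¹ be a Legendre curve with curvature (ℓ,β) and let (k₁,k₂) : I → ℝ² ∖ {0} be smooth with k₁ℓ + k₂β = 0 on I. Let A = (aᵢⱼ) be an invertible 2×2 real matrix and let (γ[A],ν[A]) : I → ℝ² × S¹ be any Legendre curve with curvature (ℓ[A],β[A]) = (a₁₁ℓ + a₁₂β, a₂₁ℓ + a₂₂β). Then the pair (k₁[A],k₂[A]) := (a₂₂k₁ − a₂₁k₂, −a₁₂k₁ + a₁₁k₂) is nowhere zero, satisfies k₁[A]·ℓ[A] + k₂[A]·β[A] =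 0 on I, and (k₁[A])'k₂[A] − k₁[A](k₂[A])' = (det A)·(k₁'k₂ − k₁k₂'). In particular, t₀ ∈ I is a vertex of γ if and only if t₀ is a vertex of γ[A]. -/
open Real Set

noncomputable section

/-- Proposition 4.6: for any Legendre curve `(γ[A], ν[A])` with curvature
`A ᵗ(ℓ, β)` for `A ∈ GL(2, ℝ)`, the pair `(a₂₂k₁ - a₂₁k₂, -a₁₂k₁ + a₁₁k₂)` is nowhere
zero, annihilates the new curvature, and its vertex determinant is `det A` times the old
one; hence `t₀` is a vertex of `γ` iff it is a vertex of `γ[A]`. -/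
theorem vertex_gl2_invariance (I : Set ℝ) (hI : I.OrdConnected)
    (γ ν : ℝ → ℝ × ℝ) (ℓ β k₁ k₂ : ℝ → ℝ)
    (hLeg : IsLegendreCurve γ ν I)
    (hcurv : IsCurvature γ ν ℓ β I)
    (hk₁ : ContDiff ℝ (⊤ : ℕ∞) k₁) (hk₂ : ContDiff ℝ (⊤ : ℕ∞) k₂)
    (hknz : ∀ t, (k₁ t, k₂ t) ≠ (0, 0))
    (hdep : ∀ t ∈ I, k₁ t * ℓ t + k₂ t * β t = 0)
    (a₁₁ a₁₂ a₂₁ a₂₂ : ℝ) (hdet : a₁₁ * a₂₂ - a₁₂ * a₂₁ ≠ 0)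
    (γA νA : ℝ → ℝ × ℝ)
    (hLegA : IsLegendreCurve γA νA I)
    (hcurvA : ∀ t ∈ I, ellOf νA t = a₁₁ * ℓ t + a₁₂ * β t ∧
      betOf γA νA t = a₂₁ * ℓ t + a₂₂ * β t) :
    (∀ t, (a₂₂ * k₁ t - a₂₁ * k₂ t, -(a₁₂ * k₁ t) + a₁₁ * k₂ t) ≠ (0, 0)) ∧
    (∀ t ∈ I, (a₂₂ * k₁ t - a₂₁ * k₂ t) * (a₁₁ * ℓ t + a₁₂ * β t)
      + (-(a₁₂ * k₁ t) + a₁₁ * k₂ t) * (a₂₁ * ℓ t + a₂₂ * β t) = 0) ∧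
    (∀ t, deriv (fun u => a₂₂ * k₁ u - a₂₁ * k₂ u) t * (-(a₁₂ * k₁ t) + a₁₁ * k₂ t)
        - (a₂₂ * k₁ t - a₂₁ * k₂ t) * deriv (fun u => -(a₁₂ * k₁ u) + a₁₁ * k₂ u) t
      = (a₁₁ * a₂₂ - a₁₂ * a₂₁) * (deriv k₁ t * k₂ t - k₁ t * deriv k₂ t)) ∧
    ∀ t₀ ∈ I, (deriv k₁ t₀ * k₂ t₀ - k₁ t₀ * deriv k₂ t₀ = 0 ↔
      deriv (fun u => a₂₂ * k₁ u - a₂₁ * k₂ u) t₀ * (-(a₁₂ * k₁ t₀) + a₁₁ * k₂ t₀)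
        - (a₂₂ * k₁ t₀ - a₂₁ * k₂ t₀) * deriv (fun u => -(a₁₂ * k₁ u) + a₁₁ * k₂ u) t₀
          = 0) := by

  have d1 : Differentiable ℝ k₁ := hk₁.differentiable (by simp)
  have d2 : Differentiable ℝ k₂ := hk₂.differentiable (by simp)
  have hder : ∀ t, deriv (fun u => a₂₂ * k₁ u - a₂₁ * k₂ u) t
      = a₂₂ * deriv k₁ t - a₂₁ * deriv k₂ t := by
    intro t
    rw [deriv_fun_sub ((d1 t).const_mul _) ((d2 t).const_mul _), deriv_const_mul _ (d1 t),
      deriv_const_mul _ (d2 t)]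
  have hder2 : ∀ t, deriv (fun u => -(a₁₂ * k₁ u) + a₁₁ * k₂ u) t
      = -(a₁₂ * deriv k₁ t) + a₁₁ * deriv k₂ t := by
    intro t
    rw [deriv_fun_add ((d1 t).const_mul _).fun_neg ((d2 t).const_mul _), deriv.fun_neg,
      deriv_const_mul _ (d1 t), deriv_const_mul _ (d2 t)]
  have key : ∀ t, deriv (fun u => a₂₂ * k₁ u - a₂₁ * k₂ u) t * (-(a₁₂ * k₁ t) + a₁₁ * k₂ t)
        - (a₂₂ * k₁ t - a₂₁ * k₂ t) * deriv (fun u => -(a₁₂ * k₁ u) + a₁₁ * k₂ u) t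
      = (a₁₁ * a₂₂ - a₁₂ * a₂₁) * (deriv k₁ t * k₂ t - k₁ t * deriv k₂ t) := by
    intro t; rw [hder, hder2]; ring
  refine ⟨?_, ?_, key, ?_⟩
  · intro t h
    have h1 : a₂₂ * k₁ t - a₂₁ * k₂ t = 0 := congrArg Prod.fst h
    have h2 : -(a₁₂ * k₁ t) + a₁₁ * k₂ t = 0 := congrArg Prod.snd h
    apply hknz t
    have hk1 : (a₁₁ * a₂₂ - a₁₂ * a₂₁) * k₁ t = 0 := by linear_combination a₁₁ * h1 + a₂₁ * h2
    have hk2 : (a₁₁ * a₂₂ - a₁₂ * a₂₁) * k₂ t = 0 := by linear_combination a₁₂ * h1 + a₂₂ * h2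
    have e1 : k₁ t = 0 := by
      rcases mul_eq_zero.mp hk1 with h | h
      · exact absurd h hdet
      · exact h
    have e2 : k₂ t = 0 := by
      rcases mul_eq_zero.mp hk2 with h | h
      · exact absurd h hdet
      · exact h
    simp [e1, e2]
  · intro t ht
    have := hdep t ht
    linear_combination (a₁₁ * a₂₂ - a₁₂ * a₂₁) * this
  · intro t₀ _
    rw [key t₀]
    constructor
    · intro h; rw [h]; ring
    · intro h
      rcases mul_eq_zero.mp h with h | h
      · exact absurd h hdet
      · exact h
end
end
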